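/- Let θ = (0, 1/ℓ, 2/ℓ, …, (ℓ−1)/ℓ), let e ≥ 2, h ≥ 1, and let κ ∈ (ℤ/eℤ)^ℓ satisfy Σ_{j=0}^{h} #{m : κ_m = i + j} ≤ 1 for every i ∈ ℤ/eℤ. Then for every ℓ-multipartition λ of n with λ^(m)_1 ≤ h for all 1 ≤ m ≤ ℓ, there exists a standard tableau t of shape λ such that 𝒜_t(k) = ∅ = ℛ_t(k) for every 1 ≤ k ≤ n; in particular deg(t) = 0. -/

import Mathlib

/-- A box `(r, c, m)`: row `r`, column `c`, component `m`. -/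
abbrev Box : Type := ℤ × ℤ × ℤ

/-- `b` is a box for level `ℓ`. -/
def IsBox (ℓ : ℕ) (b : Box) : Prop :=
  1 ≤ b.1 ∧ 1 ≤ b.2.1 ∧ 1 ≤ b.2.2 ∧ b.2.2 ≤ (ℓ : ℤ)

/-- A weighting `θ = (θ_1, …, θ_ℓ)`: rational numbers with `ℓ·θ_m ∈ ℤ` and
`θ_i − θ_j ∉ ℤ` for `i ≠ j` (within the range `1 ≤ m ≤ ℓ`). -/
structure Weighting (ℓ : ℕ) where
  θ : ℤ → ℚ
  mul_int : ∀ m : ℤ, 1 ≤ m → m ≤ (ℓ : ℤ) → ∃ z : ℤ, (ℓ : ℚ) * θ m = (z : ℚ)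
  sep : ∀ i j : ℤ, 1 ≤ i → i ≤ (ℓ : ℤ) → 1 ≤ j → j ≤ (ℓ : ℤ) → i ≠ j →
      ∀ z : ℤ, θ i - θ j ≠ (z : ℚ)

/-- `b >_θ b'`. -/
def ThetaGT {ℓ : ℕ} (W : Weighting ℓ) (b b' : Box) : Prop :=
  (W.θ b.2.2 + (b.1 : ℚ) - (b.2.1 : ℚ) < W.θ b'.2.2 + (b'.1 : ℚ) - (b'.2.1 : ℚ)) ∨
    (W.θ b.2.2 + (b.1 : ℚ) - (b.2.1 : ℚ) = W.θ b'.2.2 + (b'.1 : ℚ) - (b'.2.1 : ℚ) ∧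
      b.1 + b.2.1 < b'.1 + b'.2.1)

/-- The loading `I_(r,c,m) = θ_m + r − c + (r+c)·ε`. -/
def loading {ℓ : ℕ} (W : Weighting ℓ) (ε : ℚ) (b : Box) : ℚ :=
  W.θ b.2.2 + (b.1 : ℚ) - (b.2.1 : ℚ) + ((b.1 : ℚ) + (b.2.1 : ℚ)) * ε

/-- The residue `res(r,c,m) = κ_m + c − r`. -/
def ResBox {α : Type*} [AddGroupWithOne α] (κ : ℤ → α) (b : Box) : α :=
  κ b.2.2 + ((b.2.1 - b.1 : ℤ) : α)

/-- The `θ`-dominance order `λ ⊵_θ μ` on finite sets of boxes. -/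
def DominatesS {ℓ : ℕ} (W : Weighting ℓ) {α : Type*} [AddGroupWithOne α] (κ : ℤ → α)
    (lam mu : Set Box) : Prop :=
  ∀ b ∈ mu,
    ({b' ∈ mu | ResBox κ b' = ResBox κ b ∧ (b' = b ∨ ThetaGT W b' b)}).ncard ≤
      ({b' ∈ lam | ResBox κ b' = ResBox κ b ∧ (b' = b ∨ ThetaGT W b' b)}).ncard

/-- The Young diagram of a tuple of row lengths `p m r`. -/
def diagram (p : ℤ → ℤ → ℕ) : Set Box :=
  {b : Box | 1 ≤ b.2.1 ∧ b.2.1 ≤ (p b.2.2 b.1 : ℤ)}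

/-- An `ℓ`-multipartition of `n`, recorded by its row lengths `part m r = λ^(m)_r`. -/
structure Multipartition (ℓ n : ℕ) where
  part : ℤ → ℤ → ℕ
  decr : ∀ m r : ℤ, 1 ≤ r → part m (r + 1) ≤ part m r
  supp : ∀ m r : ℤ, (m < 1 ∨ (ℓ : ℤ) < m ∨ r < 1) → part m r = 0
  finite : (diagram part).Finite
  size : (diagram part).ncard = n

/-- `θ`-dominance for multipartitions. -/
def DomGE {ℓ n : ℕ} (W : Weighting ℓ) {α : Type*} [AddGroupWithOne α] (κ : ℤ → α)
    (lam mu : Multipartition ℓ n) : Prop :=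
  DominatesS W κ (diagram lam.part) (diagram mu.part)

/-- Strict `θ`-dominance for multipartitions. -/
def DomGT {ℓ n : ℕ} (W : Weighting ℓ) {α : Type*} [AddGroupWithOne α] (κ : ℤ → α)
    (lam mu : Multipartition ℓ n) : Prop :=
  DomGE W κ lam mu ∧ lam ≠ mu

/-- A standard tableau of shape `λ`: a bijection from `[λ]` to `{1, …, n}` increasing
along rows and columns (normalised to take the value `0` off the diagram). -/
structure IsStdTableau {ℓ n : ℕ} (lam : Multipartition ℓ n) (t : Box → ℕ) : Prop where
  mem : ∀ b ∈ diagram lam.part, 1 ≤ t b ∧ t b ≤ n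
  injOn : ∀ b ∈ diagram lam.part, ∀ b' ∈ diagram lam.part, t b = t b' → b = b'
  surjOn : ∀ k : ℕ, 1 ≤ k → k ≤ n → ∃ b ∈ diagram lam.part, t b = k
  row_lt : ∀ r c m : ℤ, (r, c, m) ∈ diagram lam.part → (r, c + 1, m) ∈ diagram lam.part →
      t (r, c, m) < t (r, c + 1, m)
  col_lt : ∀ r c m : ℤ, (r, c, m) ∈ diagram lam.part → (r + 1, c, m) ∈ diagram lam.part →
      t (r, c, m) < t (r + 1, c, m)
  zero_off : ∀ b : Box, b ∉ diagram lam.part → t b = 0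

/-- The set of standard tableaux of shape `λ`. -/
def StdTab {ℓ n : ℕ} (lam : Multipartition ℓ n) : Type :=
  {t : Box → ℕ // IsStdTableau lam t}

/-- A semistandard tableau of shape `λ` and weight `μ`: a bijection from `[λ]` onto
`{I_b : b ∈ [μ]}` satisfying the three semistandardness conditions. -/
structure IsSStdTableau {ℓ n : ℕ} (W : Weighting ℓ) (ε : ℚ)
    (lam mu : Multipartition ℓ n) (T : Box → ℚ) : Prop where
  mem : ∀ b ∈ diagram lam.part, ∃ b' ∈ diagram mu.part, T b = loading W ε b'
  injOn : ∀ b ∈ diagram lam.part, ∀ b' ∈ diagram lam.part, T b = T b' → b = b'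
  surjOn : ∀ b' ∈ diagram mu.part, ∃ b ∈ diagram lam.part, T b = loading W ε b'
  first : ∀ m : ℤ, ((1 : ℤ), (1 : ℤ), m) ∈ diagram lam.part → W.θ m < T (1, 1, m)
  col : ∀ r c m : ℤ, (r, c, m) ∈ diagram lam.part → (r - 1, c, m) ∈ diagram lam.part →
      T (r - 1, c, m) + 1 < T (r, c, m)
  row : ∀ r c m : ℤ, (r, c, m) ∈ diagram lam.part → (r, c - 1, m) ∈ diagram lam.part →
      T (r, c - 1, m) - 1 < T (r, c, m)

/-- `a` is an addable box of the box-configuration `S`. -/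
def AddableBox (ℓ : ℕ) (S : Set Box) (a : Box) : Prop :=
  a ∉ S ∧ ∃ (N : ℕ) (q : Multipartition ℓ N), diagram q.part = insert a S

/-- `b` is a removable box of the box-configuration `S`. -/
def RemovableBox (ℓ : ℕ) (S : Set Box) (b : Box) : Prop :=
  b ∈ S ∧ ∃ (N : ℕ) (q : Multipartition ℓ N), diagram q.part = S \ {b}

/-- A removable box `b` of the configuration `S` (of residue `i = res b`) is cyclic. -/
def CyclicRemovable {ℓ : ℕ} (W : Weighting ℓ) {α : Type*} [AddGroupWithOne α]
    (κ : ℤ → α) (S : Set Box) (b : Box) : Prop :=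
  RemovableBox ℓ S b ∧
    (∀ b' ∈ S,
      (ResBox κ b' = ResBox κ b - 1 ∨ ResBox κ b' = ResBox κ b ∨
        ResBox κ b' = ResBox κ b + 1) →
      ThetaGT W b b' → b'.2.2 = b.2.2 ∧ b'.1 = b.1) ∧
    (∀ a : Box, AddableBox ℓ S a → ResBox κ a = ResBox κ b →
      (ThetaGT W a b ∨ ∀ b' ∈ S, ResBox κ b' = ResBox κ b → ThetaGT W b' a))

/-- A standard tableau is cyclic if each partial shape is obtained by adding a cyclic box. -/
def IsCyclicTableau {ℓ n : ℕ} (W : Weighting ℓ) {α : Type*} [AddGroupWithOne α]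
    (κ : ℤ → α) (lam : Multipartition ℓ n) (t : Box → ℕ) : Prop :=
  ∀ b ∈ diagram lam.part,
    CyclicRemovable W κ {b' ∈ diagram lam.part | t b' ≤ t b} b

/-- The set `𝒜_t(k)` where `b = t⁻¹(k)`. -/
def ASet {ℓ n : ℕ} (W : Weighting ℓ) {α : Type*} [AddGroupWithOne α] (κ : ℤ → α)
    (lam : Multipartition ℓ n) (t : Box → ℕ) (b : Box) : Set Box :=
  {a : Box | AddableBox ℓ {b' ∈ diagram lam.part | t b' ≤ t b} a ∧
    ResBox κ a = ResBox κ b ∧ ThetaGT W b a}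

/-- The set `ℛ_t(k)` where `b = t⁻¹(k)`. -/
def RSet {ℓ n : ℕ} (W : Weighting ℓ) {α : Type*} [AddGroupWithOne α] (κ : ℤ → α)
    (lam : Multipartition ℓ n) (t : Box → ℕ) (b : Box) : Set Box :=
  {a : Box | RemovableBox ℓ {b' ∈ diagram lam.part | t b' ≤ t b} a ∧
    ResBox κ a = ResBox κ b ∧ ThetaGT W b a}

/-- The degree of a standard tableau: `deg t = Σ_k (|𝒜_t(k)| − |ℛ_t(k)|)`. -/
noncomputable def tabDeg {ℓ n : ℕ} (W : Weighting ℓ) {α : Type*} [AddGroupWithOne α]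
    (κ : ℤ → α) (lam : Multipartition ℓ n) (t : Box → ℕ) : ℤ :=
  ∑ᶠ b ∈ diagram lam.part,
    (((ASet W κ lam t b).ncard : ℤ) - ((RSet W κ lam t b).ncard : ℤ))

section AuxLemmas

variable {ℓ n : ℕ}

lemma mem_diagram_mk {p : ℤ → ℤ → ℕ} {r c m : ℤ} :
    ((r, c, m) : Box) ∈ diagram p ↔ 1 ≤ c ∧ c ≤ (p m r : ℤ) := Iff.rfl

lemma box_eq_iff {r c m R C M : ℤ} :
    ((r, c, m) : Box) = ((R, C, M) : Box) ↔ r = R ∧ c = C ∧ m = M := by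
  simp [Prod.ext_iff]

/-- Rows weakly decrease along a component. -/
lemma part_mono (lam : Multipartition ℓ n) (m : ℤ) {r r' : ℤ} (h1 : 1 ≤ r) (h : r ≤ r') :
    lam.part m r' ≤ lam.part m r := by
  refine Int.le_induction (m := r) (motive := fun s _ => lam.part m s ≤ lam.part m r) le_rfl
    (fun k hk ih => le_trans (lam.decr m k (le_trans h1 hk)) ih) r' h

lemma row_range (lam : Multipartition ℓ n) {m r : ℤ} (h : 1 ≤ lam.part m r) :
    1 ≤ r ∧ 1 ≤ m ∧ m ≤ (ℓ : ℤ) := by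
  by_contra hcon
  have h0 : lam.part m r = 0 := by apply lam.supp; omega
  omega

/-- Boxes of the diagram are in range. -/
lemma box_range (lam : Multipartition ℓ n) {r c m : ℤ}
    (hb : ((r, c, m) : Box) ∈ diagram lam.part) :
    1 ≤ r ∧ 1 ≤ c ∧ 1 ≤ m ∧ m ≤ (ℓ : ℤ) := by
  rw [mem_diagram_mk] at hb
  have h1 : 1 ≤ lam.part m r := by omega
  have := row_range lam h1
  omega

/-- Characterisation of removable boxes (necessity). -/
lemma removable_char (lam : Multipartition ℓ n) {r c m : ℤ}
    (h : RemovableBox ℓ (diagram lam.part) ((r, c, m) : Box)) :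
    1 ≤ r ∧ 1 ≤ c ∧ 1 ≤ m ∧ m ≤ (ℓ : ℤ) ∧
      c = (lam.part m r : ℤ) ∧ (lam.part m (r + 1) : ℤ) < c := by
  obtain ⟨hbmem, N, q, hq⟩ := h
  obtain ⟨hr, hc, hm1, hm2⟩ := box_range lam hbmem
  rw [mem_diagram_mk] at hbmem
  obtain ⟨hc1, hc2⟩ := hbmem
  refine ⟨hr, hc, hm1, hm2, ?_, ?_⟩
  · by_contra hne
    have hlt : c < (lam.part m r : ℤ) := lt_of_le_of_ne hc2 hne
    have h1 : ((r, c + 1, m) : Box) ∈ diagram q.part := by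
      rw [hq]
      refine ⟨mem_diagram_mk.mpr ⟨by omega, by omega⟩, ?_⟩
      rw [Set.mem_singleton_iff, box_eq_iff]
      omega
    have h2 : ((r, c, m) : Box) ∈ diagram q.part := by
      rw [mem_diagram_mk] at h1 ⊢
      omega
    rw [hq] at h2
    exact absurd rfl h2.2
  · by_contra hge
    push_neg at hge
    have h1 : ((r + 1, c, m) : Box) ∈ diagram q.part := by
      rw [hq]
      refine ⟨mem_diagram_mk.mpr ⟨hc, hge⟩, ?_⟩
      rw [Set.mem_singleton_iff, box_eq_iff]
      omega
    have h2 : ((r, c, m) : Box) ∈ diagram q.part := by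
      rw [mem_diagram_mk] at h1 ⊢
      have := q.decr m r hr
      omega
    rw [hq] at h2
    exact absurd rfl h2.2

/-- Characterisation of addable boxes (necessity). -/
lemma addable_char (lam : Multipartition ℓ n) {r c m : ℤ}
    (h : AddableBox ℓ (diagram lam.part) ((r, c, m) : Box)) :
    1 ≤ r ∧ 1 ≤ c ∧ 1 ≤ m ∧ m ≤ (ℓ : ℤ) ∧
      c = (lam.part m r : ℤ) + 1 ∧
      (r = 1 ∨ c ≤ (lam.part m (r - 1) : ℤ)) := by
  obtain ⟨hnot, N, q, hq⟩ := h
  have hbq : ((r, c, m) : Box) ∈ diagram q.part := by rw [hq]; exact Set.mem_insert _ _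
  obtain ⟨hr, hc, hm1, hm2⟩ := box_range q hbq
  rw [mem_diagram_mk] at hbq
  obtain ⟨hc1, hc2⟩ := hbq
  have hgt : (lam.part m r : ℤ) < c := by
    by_contra hle
    exact hnot (mem_diagram_mk.mpr ⟨hc1, by omega⟩)
  refine ⟨hr, hc, hm1, hm2, ?_, ?_⟩
  · by_contra hne
    have h1 : ((r, c - 1, m) : Box) ∈ diagram q.part := mem_diagram_mk.mpr ⟨by omega, by omega⟩
    rw [hq] at h1
    rcases h1 with h1 | h1
    · rw [box_eq_iff] at h1; omega
    · rw [mem_diagram_mk] at h1; omega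
  · by_cases hr1 : r = 1
    · exact Or.inl hr1
    · right
      have h1 : ((r - 1, c, m) : Box) ∈ diagram q.part := by
        rw [mem_diagram_mk]
        have := q.decr m (r - 1) (by omega)
        rw [sub_add_cancel] at this
        omega
      rw [hq] at h1
      rcases h1 with h1 | h1
      · rw [box_eq_iff] at h1; omega
      · rw [mem_diagram_mk] at h1; exact h1.2

/-- Removing a removable box yields a multipartition (sufficiency). -/
lemma exists_remove (lam : Multipartition ℓ (n + 1)) {R C M : ℤ}
    (hR : 1 ≤ R) (hM1 : 1 ≤ M) (hM2 : M ≤ (ℓ : ℤ))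
    (hC : C = (lam.part M R : ℤ)) (hC1 : 1 ≤ C)
    (hrem : (lam.part M (R + 1) : ℤ) < C) :
    ∃ q : Multipartition ℓ n,
      diagram q.part = diagram lam.part \ {((R, C, M) : Box)} ∧
      ∀ m r : ℤ, q.part m r ≤ lam.part m r := by
  set p' : ℤ → ℤ → ℕ := fun m r =>
    if m = M ∧ r = R then lam.part M R - 1 else lam.part m r with hp'
  have hdiag : diagram p' = diagram lam.part \ {((R, C, M) : Box)} := by
    ext ⟨r, c, m⟩
    rw [mem_diagram_mk, Set.mem_diff, mem_diagram_mk, Set.mem_singleton_iff, box_eq_iff]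
    simp only [hp']
    by_cases hcase : m = M ∧ r = R
    · rw [if_pos hcase]
      obtain ⟨h1, h2⟩ := hcase
      subst h1; subst h2
      omega
    · rw [if_neg hcase]
      constructor
      · rintro ⟨hh1, hh2⟩
        exact ⟨⟨hh1, hh2⟩, fun hh3 => hcase ⟨hh3.2.2, hh3.1⟩⟩
      · rintro ⟨⟨hh1, hh2⟩, _⟩
        exact ⟨hh1, hh2⟩
  have hmem : ((R, C, M) : Box) ∈ diagram lam.part := mem_diagram_mk.mpr ⟨hC1, by omega⟩
  refine ⟨⟨p', ?_, ?_, ?_, ?_⟩, hdiag, ?_⟩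
  · intro m r hr1
    simp only [hp']
    by_cases h1 : m = M ∧ r + 1 = R
    · have hrr := h1.2
      rw [if_pos h1, if_neg (show ¬(m = M ∧ r = R) by omega)]
      rw [h1.1]
      have := lam.decr M r hr1
      rw [hrr] at this
      omega
    · rw [if_neg h1]
      by_cases h2 : m = M ∧ r = R
      · rw [if_pos h2]
        obtain ⟨hm, hrr⟩ := h2
        subst hm; subst hrr
        omega
      · rw [if_neg h2]
        exact lam.decr m r hr1
  · intro m r hcon
    simp only [hp']
    rw [if_neg (by omega)]
    exact lam.supp m r hcon
  · show (diagram p').Finite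
    rw [hdiag]
    exact lam.finite.diff
  · show (diagram p').ncard = n
    rw [hdiag, Set.ncard_diff_singleton_of_mem hmem, lam.size]
    omega
  · intro m r
    simp only [hp']
    split_ifs with hsplit
    · obtain ⟨hm, hrr⟩ := hsplit
      subst hm; subst hrr
      omega
    · exact le_refl _

/-- The coarse loading `(m-1)/ℓ + r - c`. -/
def vv (ℓ : ℕ) (x : Box) : ℚ := ((x.2.2 : ℚ) - 1) / (ℓ : ℚ) + (x.1 : ℚ) - (x.2.1 : ℚ)

lemma vv_mk {r c m : ℤ} : vv ℓ ((r, c, m) : Box) = ((m : ℚ) - 1) / (ℓ : ℚ) + (r : ℚ) - (c : ℚ) :=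
  rfl

lemma thetaGT_iff {W : Weighting ℓ}
    (hθ : ∀ m : ℤ, 1 ≤ m → m ≤ (ℓ : ℤ) → W.θ m = ((m : ℚ) - 1) / (ℓ : ℚ)) {x y : Box}
    (hx1 : 1 ≤ x.2.2) (hx2 : x.2.2 ≤ (ℓ : ℤ)) (hy1 : 1 ≤ y.2.2) (hy2 : y.2.2 ≤ (ℓ : ℤ)) :
    ThetaGT W x y ↔
      (vv ℓ x < vv ℓ y ∨ (vv ℓ x = vv ℓ y ∧ x.1 + x.2.1 < y.1 + y.2.1)) := by
  unfold ThetaGT vv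
  rw [hθ x.2.2 hx1 hx2, hθ y.2.2 hy1 hy2]

lemma vv_lt_same {r c r' c' m : ℤ} (h : r - c < r' - c') :
    vv ℓ ((r, c, m) : Box) < vv ℓ ((r', c', m) : Box) := by
  rw [vv_mk, vv_mk]
  have h2 : ((r - c : ℤ) : ℚ) < ((r' - c' : ℤ) : ℚ) := by exact_mod_cast h
  push_cast at h2
  linarith

lemma vv_le_int (hℓ : 1 ≤ ℓ) {r c m r' c' m' : ℤ} (hm1 : 1 ≤ m) (hm2 : m ≤ (ℓ : ℤ))
    (hm1' : 1 ≤ m') (hm2' : m' ≤ (ℓ : ℤ))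
    (h : vv ℓ ((r, c, m) : Box) ≤ vv ℓ ((r', c', m') : Box)) : r - c ≤ r' - c' := by
  by_contra hcon
  push_neg at hcon
  have hl0 : (0 : ℚ) < (ℓ : ℚ) := by
    have : (1 : ℚ) ≤ (ℓ : ℚ) := by exact_mod_cast hℓ
    linarith
  have hd : ((m' : ℚ) - m) / (ℓ : ℚ) < 1 := by
    rw [div_lt_one hl0]
    have h1 : (m' : ℚ) ≤ (ℓ : ℚ) := by exact_mod_cast hm2'
    have h2 : (1 : ℚ) ≤ (m : ℚ) := by exact_mod_cast hm1
    linarith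
  have hint : (1 : ℚ) ≤ (r : ℚ) - c - ((r' : ℚ) - c') := by
    have h3 : (1 : ℤ) ≤ (r - c) - (r' - c') := by omega
    have h4 : ((1 : ℤ) : ℚ) ≤ (((r - c) - (r' - c') : ℤ) : ℚ) := by exact_mod_cast h3
    push_cast at h4
    linarith
  rw [vv_mk, vv_mk] at h
  have hfin : (r : ℚ) - c - ((r' : ℚ) - c') ≤ ((m' : ℚ) - m) / (ℓ : ℚ) := by
    have : ((m' : ℚ) - 1) / ℓ - ((m : ℚ) - 1) / ℓ = ((m' : ℚ) - m) / ℓ := by ring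
    linarith [this]
  linarith

lemma vv_eq_comp (hℓ : 1 ≤ ℓ) {r c m r' c' m' : ℤ} (hm1 : 1 ≤ m) (hm2 : m ≤ (ℓ : ℤ))
    (hm1' : 1 ≤ m') (hm2' : m' ≤ (ℓ : ℤ))
    (h : vv ℓ ((r, c, m) : Box) = vv ℓ ((r', c', m') : Box)) : m = m' := by
  have h1 := vv_le_int hℓ hm1 hm2 hm1' hm2' h.le
  have h2 := vv_le_int hℓ hm1' hm2' hm1 hm2 h.ge
  have h3 : r - c = r' - c' := le_antisymm h1 h2
  rw [vv_mk, vv_mk] at h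
  have hl0 : ((ℓ : ℚ)) ≠ 0 := by
    have : (1 : ℚ) ≤ (ℓ : ℚ) := by exact_mod_cast hℓ
    linarith
  have h4 : ((r : ℚ)) - c = (r' : ℚ) - c' := by
    have := h3
    have h5 : ((r - c : ℤ) : ℚ) = ((r' - c' : ℤ) : ℚ) := by exact_mod_cast this
    push_cast at h5
    linarith
  have h6 : ((m : ℚ) - 1) / ℓ = ((m' : ℚ) - 1) / ℓ := by linarith
  field_simp at h6
  exact_mod_cast (by linarith : (m : ℚ) = m')

lemma exists_lastRow (lam : Multipartition ℓ n) (m : ℤ) (h : 1 ≤ lam.part m 1) :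
    ∃ L : ℤ, 1 ≤ L ∧ 1 ≤ lam.part m L ∧ lam.part m (L + 1) = 0 ∧
      ∀ r : ℤ, 1 ≤ r → 1 ≤ lam.part m r → r ≤ L := by
  set S : Set ℤ := {r : ℤ | 1 ≤ r ∧ 1 ≤ lam.part m r} with hS
  have hfin : S.Finite := by
    have hsub : S ⊆ (fun r : ℤ => ((r, 1, m) : Box)) ⁻¹' (diagram lam.part) := by
      intro r hr
      exact mem_diagram_mk.mpr ⟨le_refl 1, by exact_mod_cast hr.2⟩
    refine Set.Finite.subset (Set.Finite.preimage ?_ lam.finite) hsub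
    intro a _ b _ hab
    simpa [Prod.ext_iff] using hab
  have hne : S.Nonempty := ⟨1, ⟨le_refl 1, h⟩⟩
  obtain ⟨L, hLmem, hLmax⟩ := Set.Finite.exists_maximalFor id S hfin hne
  have hLa := hLmem.1
  refine ⟨L, hLmem.1, hLmem.2, ?_, ?_⟩
  · by_contra hcon
    have hL1 : L + 1 ∈ S := ⟨by omega, by omega⟩
    have h9 := hLmax (j := L + 1) hL1 (by simp only [id]; omega)
    simp only [id] at h9
    omega
  · intro r hr1 hr2
    by_contra hcon
    have h9 := hLmax (j := r) ⟨hr1, hr2⟩ (by simp only [id]; omega)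
    simp only [id] at h9
    omega

variable {e h : ℕ}

lemma e_large (he : 2 ≤ e) (hℓ : 1 ≤ ℓ) (κ : ℤ → ZMod e)
    (hκ : ∀ i : ZMod e, (∑ j ∈ Finset.range (h + 1),
        ((Finset.Icc (1 : ℤ) (ℓ : ℤ)).filter fun m => κ m = i + (j : ZMod e)).card) ≤ 1) :
    h + 1 ≤ e := by
  by_contra hcon
  push_neg at hcon
  have h1 : ({0, e} : Finset ℕ) ⊆ Finset.range (h + 1) := by
    intro x hx
    simp only [Finset.mem_insert, Finset.mem_singleton] at hx
    rw [Finset.mem_range]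
    omega
  have hterm : ∀ j ∈ ({0, e} : Finset ℕ),
      1 ≤ ((Finset.Icc (1 : ℤ) (ℓ : ℤ)).filter fun m => κ m = κ 1 + (j : ZMod e)).card := by
    intro j hj
    rw [Nat.one_le_iff_ne_zero, ← Nat.pos_iff_ne_zero, Finset.card_pos]
    refine ⟨1, Finset.mem_filter.mpr ⟨Finset.mem_Icc.mpr ⟨le_refl 1, by exact_mod_cast hℓ⟩, ?_⟩⟩
    simp only [Finset.mem_insert, Finset.mem_singleton] at hj
    rcases hj with rfl | rfl
    · simp
    · simp [ZMod.natCast_self]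
  have hsum2 : 2 ≤ ∑ j ∈ ({0, e} : Finset ℕ),
      ((Finset.Icc (1 : ℤ) (ℓ : ℤ)).filter fun m => κ m = κ 1 + (j : ZMod e)).card := by
    rw [Finset.sum_pair (by omega : (0 : ℕ) ≠ e)]
    have t1 := hterm 0 (by simp)
    have t2 := hterm e (by simp)
    omega
  have hle := Finset.sum_le_sum_of_subset
    (f := fun j : ℕ => ((Finset.Icc (1 : ℤ) (ℓ : ℤ)).filter fun m => κ m = κ 1 + (j : ZMod e)).card) h1
  have hcontra : (2 : ℕ) ≤ 1 := le_trans hsum2 (le_trans hle (hκ (κ 1)))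
  omega

lemma kappa_clash (hℓ : 1 ≤ ℓ) (κ : ℤ → ZMod e)
    (hκ : ∀ i : ZMod e, (∑ j ∈ Finset.range (h + 1),
        ((Finset.Icc (1 : ℤ) (ℓ : ℤ)).filter fun m => κ m = i + (j : ZMod e)).card) ≤ 1)
    {m M : ℤ} (hm1 : 1 ≤ m) (hm2 : m ≤ (ℓ : ℤ)) (hM1 : 1 ≤ M) (hM2 : M ≤ (ℓ : ℤ))
    (hne : m ≠ M) {j : ℕ} (hj : j ≤ h) (hrel : κ m = κ M + (j : ZMod e)) : False := by
  have hbig := hκ (κ M)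
  have hMin : M ∈ ((Finset.Icc (1 : ℤ) (ℓ : ℤ)).filter
      fun x => κ x = κ M + ((0 : ℕ) : ZMod e)) :=
    Finset.mem_filter.mpr ⟨Finset.mem_Icc.mpr ⟨hM1, hM2⟩, by simp⟩
  have hmin : m ∈ ((Finset.Icc (1 : ℤ) (ℓ : ℤ)).filter
      fun x => κ x = κ M + ((j : ℕ) : ZMod e)) :=
    Finset.mem_filter.mpr ⟨Finset.mem_Icc.mpr ⟨hm1, hm2⟩, hrel⟩
  have key : ∀ j' : ℕ, j' < h + 1 →
      (((Finset.Icc (1 : ℤ) (ℓ : ℤ)).filter fun x => κ x = κ M + (j' : ZMod e)).card : ℕ) ≤ 1 := by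
    intro j' hj'
    have hterm := Finset.single_le_sum
      (f := fun j'' : ℕ => (((Finset.Icc (1 : ℤ) (ℓ : ℤ)).filter
        fun x => κ x = κ M + (j'' : ZMod e)).card : ℕ))
      (fun _ _ => Nat.zero_le _) (Finset.mem_range.mpr hj')
    exact le_trans hterm hbig
  by_cases hj0 : j = 0
  · subst hj0
    have h2 : 2 ≤ (((Finset.Icc (1 : ℤ) (ℓ : ℤ)).filter
        fun x => κ x = κ M + ((0 : ℕ) : ZMod e)).card : ℕ) := by
      have hsub : ({m, M} : Finset ℤ) ⊆ ((Finset.Icc (1 : ℤ) (ℓ : ℤ)).filter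
          fun x => κ x = κ M + ((0 : ℕ) : ZMod e)) := by
        intro x hx
        simp only [Finset.mem_insert, Finset.mem_singleton] at hx
        rcases hx with rfl | rfl
        · exact hmin
        · exact hMin
      calc 2 = ({m, M} : Finset ℤ).card := (Finset.card_pair hne).symm
        _ ≤ _ := Finset.card_le_card hsub
    have h3 := key 0 (by omega)
    omega
  · have h1 : ({0, j} : Finset ℕ) ⊆ Finset.range (h + 1) := by
      intro x hx
      simp only [Finset.mem_insert, Finset.mem_singleton] at hx
      rw [Finset.mem_range]
      omega
    have hsum2 : 2 ≤ ∑ j' ∈ ({0, j} : Finset ℕ), (((Finset.Icc (1 : ℤ) (ℓ : ℤ)).filter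
        fun x => κ x = κ M + (j' : ZMod e)).card : ℕ) := by
      rw [Finset.sum_pair (Ne.symm hj0)]
      have t1 : 1 ≤ (((Finset.Icc (1 : ℤ) (ℓ : ℤ)).filter
          fun x => κ x = κ M + ((0 : ℕ) : ZMod e)).card : ℕ) := Finset.card_pos.mpr ⟨M, hMin⟩
      have t2 : 1 ≤ (((Finset.Icc (1 : ℤ) (ℓ : ℤ)).filter
          fun x => κ x = κ M + ((j : ℕ) : ZMod e)).card : ℕ) := Finset.card_pos.mpr ⟨m, hmin⟩
      omega
    have hle := Finset.sum_le_sum_of_subset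
      (f := fun j' : ℕ => (((Finset.Icc (1 : ℤ) (ℓ : ℤ)).filter
        fun x => κ x = κ M + (j' : ZMod e)).card : ℕ)) h1
    have hcontra : (2 : ℕ) ≤ 1 := le_trans hsum2 (le_trans hle hbig)
    omega

lemma resBox_mk {α : Type*} [AddGroupWithOne α] (κ : ℤ → α) {r c m : ℤ} :
    ResBox κ ((r, c, m) : Box) = κ m + ((c - r : ℤ) : α) := rfl

/-- Existence of a removable box with no θ-smaller addable/removable box of the
same residue. -/
lemma exists_good_box (hℓ : 1 ≤ ℓ) {W : Weighting ℓ}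
    (hθ : ∀ m : ℤ, 1 ≤ m → m ≤ (ℓ : ℤ) → W.θ m = ((m : ℚ) - 1) / (ℓ : ℚ))
    (κ : ℤ → ZMod e)
    (hκ : ∀ i : ZMod e, (∑ j ∈ Finset.range (h + 1),
        ((Finset.Icc (1 : ℤ) (ℓ : ℤ)).filter fun m => κ m = i + (j : ZMod e)).card) ≤ 1)
    (he : 2 ≤ e) (hh : 1 ≤ h)
    (lam : Multipartition ℓ n) (hnemp : (diagram lam.part).Nonempty)
    (hcols : ∀ m : ℤ, 1 ≤ m → m ≤ (ℓ : ℤ) → lam.part m 1 ≤ h) :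
    ∃ R C M : ℤ, 1 ≤ R ∧ 1 ≤ C ∧ 1 ≤ M ∧ M ≤ (ℓ : ℤ) ∧
      C = (lam.part M R : ℤ) ∧ (lam.part M (R + 1) : ℤ) < C ∧
      (∀ a : Box, AddableBox ℓ (diagram lam.part) a →
        ResBox κ a = ResBox κ ((R, C, M) : Box) → ¬ ThetaGT W ((R, C, M) : Box) a) ∧
      (∀ b' : Box, RemovableBox ℓ (diagram lam.part) b' →
        ¬ ThetaGT W ((R, C, M) : Box) b') := by
  classical
  set RemS : Set Box := {x : Box | 1 ≤ x.1 ∧ 1 ≤ x.2.1 ∧ 1 ≤ x.2.2 ∧ x.2.2 ≤ (ℓ : ℤ) ∧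
      x.2.1 = (lam.part x.2.2 x.1 : ℤ) ∧ (lam.part x.2.2 (x.1 + 1) : ℤ) < x.2.1} with hRemS
  have hsubdiag : RemS ⊆ diagram lam.part := by
    rintro ⟨r, c, m⟩ hx
    obtain ⟨h1, h2, h3, h4, h5, h6⟩ := hx
    exact mem_diagram_mk.mpr ⟨h2, le_of_eq h5⟩
  have hfin : RemS.Finite := lam.finite.subset hsubdiag
  -- bottom removable box of a nonempty component lies in RemS
  have hbot : ∀ m : ℤ, 1 ≤ m → m ≤ (ℓ : ℤ) → 1 ≤ lam.part m 1 →
      ∀ L : ℤ, 1 ≤ L → 1 ≤ lam.part m L → lam.part m (L + 1) = 0 →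
      ((L, (lam.part m L : ℤ), m) : Box) ∈ RemS := by
    intro m hm1 hm2 _ L hL1 hL2 hL3
    refine ⟨hL1, ?_, hm1, hm2, rfl, ?_⟩
    · show (1 : ℤ) ≤ (lam.part m L : ℤ)
      exact_mod_cast hL2
    · show (lam.part m (L + 1) : ℤ) < (lam.part m L : ℤ)
      rw [hL3]
      exact_mod_cast hL2
  -- RemS is nonempty
  have hne : RemS.Nonempty := by
    obtain ⟨⟨r, c, m⟩, hb⟩ := hnemp
    obtain ⟨h1, h2, h3, h4⟩ := box_range lam hb
    rw [mem_diagram_mk] at hb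
    have hrow1 : 1 ≤ lam.part m 1 := by
      have := part_mono lam m (le_refl 1) h1
      omega
    obtain ⟨L, hL1, hL2, hL3, _⟩ := exists_lastRow lam m hrow1
    exact ⟨_, hbot m h3 h4 hrow1 L hL1 hL2 hL3⟩
  -- choose the maximal removable box
  have hneF : hfin.toFinset.Nonempty := by
    obtain ⟨x, hx⟩ := hne
    exact ⟨x, hfin.mem_toFinset.mpr hx⟩
  obtain ⟨b0, hb0mem, hb0max⟩ := hfin.toFinset.exists_max_image (vv ℓ) hneF
  have hneF2 : (hfin.toFinset.filter (fun x => vv ℓ x = vv ℓ b0)).Nonempty :=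
    ⟨b0, Finset.mem_filter.mpr ⟨hb0mem, rfl⟩⟩
  obtain ⟨b, hbmem2, hbmax2⟩ :=
    (hfin.toFinset.filter (fun x => vv ℓ x = vv ℓ b0)).exists_max_image
      (fun x => x.1 + x.2.1) hneF2
  have hbRem : b ∈ RemS := hfin.mem_toFinset.mp (Finset.mem_filter.mp hbmem2).1
  have hbv : vv ℓ b = vv ℓ b0 := (Finset.mem_filter.mp hbmem2).2
  have hvmax : ∀ x ∈ RemS, vv ℓ x ≤ vv ℓ b := by
    intro x hx
    rw [hbv]
    exact hb0max x (hfin.mem_toFinset.mpr hx)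
  have hsmax : ∀ x ∈ RemS, vv ℓ x = vv ℓ b → x.1 + x.2.1 ≤ b.1 + b.2.1 := by
    intro x hx hvx
    exact hbmax2 x (Finset.mem_filter.mpr ⟨hfin.mem_toFinset.mpr hx, hvx.trans hbv⟩)
  obtain ⟨R, C, M⟩ := b
  obtain ⟨hR1, hC1, hM1, hM2, hC, hCrem⟩ := hbRem
  have hR1 : (1 : ℤ) ≤ R := hR1
  have hC1 : (1 : ℤ) ≤ C := hC1
  have hM1 : (1 : ℤ) ≤ M := hM1
  have hM2 : M ≤ (ℓ : ℤ) := hM2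
  have hC : C = (lam.part M R : ℤ) := hC
  have hCrem : (lam.part M (R + 1) : ℤ) < C := hCrem
  have hsmax' : ∀ x ∈ RemS, vv ℓ x = vv ℓ ((R, C, M) : Box) → x.1 + x.2.1 ≤ R + C := hsmax
  -- maximality in ThetaGT form
  have hmax : ∀ x ∈ RemS, ¬ ThetaGT W ((R, C, M) : Box) x := by
    intro x hx hgt
    rw [thetaGT_iff hθ hM1 hM2 hx.2.2.1 hx.2.2.2.1] at hgt
    rcases hgt with hlt | ⟨heq, hsum⟩
    · exact absurd (hvmax _ hx) (not_le.mpr hlt)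
    · have h9 : x.1 + x.2.1 ≤ R + C := hsmax' _ hx heq.symm
      have h10 : R + C < x.1 + x.2.1 := hsum
      omega
  -- component M is nonempty, and (R, C, M) is its bottom removable box
  have hMrow1 : 1 ≤ lam.part M 1 := by
    have := part_mono lam M (le_refl 1) hR1
    omega
  obtain ⟨LM, hLM1, hLM2, hLM3, hLM4⟩ := exists_lastRow lam M hMrow1
  have hRLM : R = LM := by
    have hRle : R ≤ LM := hLM4 R hR1 (by omega)
    by_contra hne'
    have hRlt : R < LM := by omega
    have hbotM : ((LM, (lam.part M LM : ℤ), M) : Box) ∈ RemS :=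
      hbot M hM1 hM2 hMrow1 LM hLM1 hLM2 hLM3
    have hmono : lam.part M LM ≤ lam.part M (R + 1) := part_mono lam M (by omega) (by omega)
    have hvlt : vv ℓ ((R, C, M) : Box) < vv ℓ ((LM, (lam.part M LM : ℤ), M) : Box) :=
      vv_lt_same (by omega)
    exact absurd (hvmax _ hbotM) (not_le.mpr hvlt)
  have hCh : C ≤ (h : ℤ) := by
    have := part_mono lam M (le_refl 1) hR1
    have := hcols M hM1 hM2
    omega
  refine ⟨R, C, M, hR1, hC1, hM1, hM2, hC, hCrem, ?_, ?_⟩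
  · -- no θ-smaller addable box of the same residue
    rintro ⟨r, c, m⟩ hadd hres hgt
    obtain ⟨hr1, hc1, hm1, hm2, hcval, hcorner⟩ := addable_char lam hadd
    rw [thetaGT_iff hθ hM1 hM2 hm1 hm2] at hgt
    by_cases hc2 : 2 ≤ c
    · -- a is not at the start of a row: its component has a removable box θ-above a
      have hrow1 : 1 ≤ lam.part m 1 := by
        have := part_mono lam m (le_refl 1) hr1
        omega
      obtain ⟨L, hL1, hL2, hL3, hL4⟩ := exists_lastRow lam m hrow1
      have hbotm : ((L, (lam.part m L : ℤ), m) : Box) ∈ RemS :=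
        hbot m hm1 hm2 hrow1 L hL1 hL2 hL3
      have hrL : r ≤ L := hL4 r hr1 (by omega)
      have hmono : lam.part m L ≤ lam.part m r := part_mono lam m hr1 hrL
      have hvlt : vv ℓ ((r, c, m) : Box) < vv ℓ ((L, (lam.part m L : ℤ), m) : Box) :=
        vv_lt_same (by omega)
      have hvle := hvmax _ hbotm
      rcases hgt with hlt | ⟨heq, _⟩
      · linarith
      · linarith [heq.le]
    · -- a is at the start of a row, i.e. a = (Lm + 1, 1, m)
      have hcone : c = 1 := by omega
      subst hcone
      have hpm0 : lam.part m r = 0 := by omega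
      -- determine Lm with r = Lm + 1
      have hmain : ∀ Lm : ℤ, 0 ≤ Lm → r = Lm + 1 → ((Lm + C) - R : ℤ) ≤ (h : ℤ) → False := by
        intro Lm hLm0 hrLm hupper
        by_cases hmM : m = M
        · -- same component: e ∣ C, impossible
          subst hmM
          have hLLM : r = LM + 1 := by
            -- r - 1 is a nonempty row or r = 1; and row r is empty
            have hrle : r ≤ LM + 1 := by
              rcases hcorner with hone | hcle
              · omega
              · have h9 : 1 ≤ lam.part m (r - 1) := by omega
                have := hLM4 (r - 1) (row_range lam h9).1 h9
                omega
            have hrge : LM + 1 ≤ r := by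
              by_contra hcon
              have : lam.part m LM ≤ lam.part m r := part_mono lam m hr1 (by omega)
              omega
            omega
          rw [resBox_mk, resBox_mk] at hres
          have hzero : (((C - R) - (1 - r) : ℤ) : ZMod e) = 0 := by
            push_cast at hres ⊢
            linear_combination -hres
          rw [hLLM, hRLM] at hzero
          have hzC : ((C : ℤ) : ZMod e) = 0 := by
            have : ((C - LM) - (1 - (LM + 1)) : ℤ) = C := by ring
            rwa [this] at hzero
          have hdvd : (e : ℤ) ∣ C := (ZMod.intCast_zmod_eq_zero_iff_dvd C e).mp hzC
          have hebound : h + 1 ≤ e := e_large he hℓ κ hκ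
          have := Int.le_of_dvd (by omega) hdvd
          omega
        · -- different components: contradiction with the residue-separation condition
          rw [resBox_mk, resBox_mk] at hres
          have hrel : κ m = κ M + (((C - R + Lm : ℤ)) : ZMod e) := by
            rw [hrLm] at hres
            push_cast at hres ⊢
            linear_combination hres
          -- lower bound: from ThetaGT
          have hlow : 0 ≤ C - R + Lm := by
            rcases hgt with hlt | ⟨heq, _⟩
            · have h9 : R - C ≤ r - 1 := vv_le_int hℓ hM1 hM2 hm1 hm2 hlt.le
              omega
            · exact absurd (vv_eq_comp hℓ hM1 hM2 hm1 hm2 heq) (Ne.symm hmM)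
          set j : ℕ := (C - R + Lm).toNat with hj
          have hjcast : ((j : ℕ) : ZMod e) = (((C - R + Lm : ℤ)) : ZMod e) := by
            have h9 : ((j : ℕ) : ℤ) = C - R + Lm := Int.toNat_of_nonneg hlow
            rw [← h9]
            push_cast
            ring
          have hjh : j ≤ h := by omega
          exact kappa_clash hℓ κ hκ hm1 hm2 hM1 hM2 hmM hjh (by rw [hjcast]; exact hrel)
      by_cases hrow : 1 ≤ lam.part m 1
      · obtain ⟨L, hL1, hL2, hL3, hL4⟩ := exists_lastRow lam m hrow
        have hrL : r = L + 1 := by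
          have hrge : L + 1 ≤ r := by
            by_contra hcon
            have : lam.part m L ≤ lam.part m r := part_mono lam m hr1 (by omega)
            omega
          have hrle : r ≤ L + 1 := by
            rcases hcorner with hone | hcle
            · omega
            · have h9 : 1 ≤ lam.part m (r - 1) := by omega
              have := hL4 (r - 1) (row_range lam h9).1 h9
              omega
          omega
        refine hmain L (by omega) hrL ?_
        -- upper bound: from maximality of b over the bottom box of component m
        have hbotm : ((L, (lam.part m L : ℤ), m) : Box) ∈ RemS :=
          hbot m hm1 hm2 hrow L hL1 hL2 hL3
        have hvle := hvmax _ hbotm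
        have hint : L - (lam.part m L : ℤ) ≤ R - C := vv_le_int hℓ hm1 hm2 hM1 hM2 hvle
        have hcolm : lam.part m L ≤ h := by
          have := part_mono lam m (le_refl 1) hL1
          have := hcols m hm1 hm2
          omega
        omega
      · -- empty component: r = 1
        have hr1' : r = 1 := by
          rcases hcorner with hone | hcle
          · exact hone
          · exfalso
            have h9 : 1 ≤ lam.part m (r - 1) := by omega
            have h10 := (row_range lam h9).1
            have := part_mono lam m (le_refl 1) (by omega : (1 : ℤ) ≤ r - 1)
            omega
        exact hmain 0 le_rfl (by omega) (by omega)
  · -- no θ-smaller removable box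
    rintro ⟨r', c', m'⟩ hrem hgt
    obtain ⟨h1, h2, h3, h4, h5, h6⟩ := removable_char lam hrem
    exact hmax ((r', c', m') : Box) ⟨h1, h2, h3, h4, h5, h6⟩ hgt

/-- Main induction: every multipartition with at most `h` columns admits a standard
tableau all of whose `𝒜`- and `ℛ`-sets are empty. -/
lemma exists_flat_tableau (hℓ : 1 ≤ ℓ) {W : Weighting ℓ}
    (hθ : ∀ m : ℤ, 1 ≤ m → m ≤ (ℓ : ℤ) → W.θ m = ((m : ℚ) - 1) / (ℓ : ℚ))
    (κ : ℤ → ZMod e)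
    (hκ : ∀ i : ZMod e, (∑ j ∈ Finset.range (h + 1),
        ((Finset.Icc (1 : ℤ) (ℓ : ℤ)).filter fun m => κ m = i + (j : ZMod e)).card) ≤ 1)
    (he : 2 ≤ e) (hh : 1 ≤ h) :
    ∀ n : ℕ, ∀ lam : Multipartition ℓ n,
      (∀ m : ℤ, 1 ≤ m → m ≤ (ℓ : ℤ) → lam.part m 1 ≤ h) →
      ∃ t : Box → ℕ, IsStdTableau lam t ∧
        ∀ b ∈ diagram lam.part, ASet W κ lam t b = ∅ ∧ RSet W κ lam t b = ∅ := by
  intro n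
  induction n with
  | zero =>
    intro lam _
    have hempty : diagram lam.part = ∅ := (Set.ncard_eq_zero lam.finite).mp lam.size
    refine ⟨fun _ => 0, ⟨?_, ?_, ?_, ?_, ?_, ?_⟩, ?_⟩
    · intro b hb; rw [hempty] at hb; exact absurd hb (Set.notMem_empty b)
    · intro b hb; rw [hempty] at hb; exact absurd hb (Set.notMem_empty b)
    · intro k h1 h2; omega
    · intro r c m hb; rw [hempty] at hb; exact absurd hb (Set.notMem_empty _)
    · intro r c m hb; rw [hempty] at hb; exact absurd hb (Set.notMem_empty _)
    · intro b _; rfl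
    · intro b hb; rw [hempty] at hb; exact absurd hb (Set.notMem_empty b)
  | succ n ih =>
    intro lam hcols
    have hne : (diagram lam.part).Nonempty := by
      apply Set.nonempty_of_ncard_ne_zero
      rw [lam.size]
      omega
    obtain ⟨R, C, M, hR1, hC1, hM1, hM2, hC, hCrem, hAdd, hRem⟩ :=
      exists_good_box hℓ hθ κ hκ he hh lam hne hcols
    obtain ⟨q, hqdiag, hqle⟩ := exists_remove lam hR1 hM1 hM2 hC hC1 hCrem
    have hqcols : ∀ m : ℤ, 1 ≤ m → m ≤ (ℓ : ℤ) → q.part m 1 ≤ h :=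
      fun m h1 h2 => le_trans (hqle m 1) (hcols m h1 h2)
    obtain ⟨t', ht'std, ht'sets⟩ := ih q hqcols
    set b : Box := ((R, C, M) : Box) with hbdef
    have hbmem : b ∈ diagram lam.part := mem_diagram_mk.mpr ⟨hC1, le_of_eq hC⟩
    have hbnotq : b ∉ diagram q.part := by
      rw [hqdiag]
      intro hx
      exact hx.2 rfl
    set t : Box → ℕ := fun x => if x = b then n + 1 else t' x with htdef
    have htb : t b = n + 1 := if_pos rfl
    have htne : ∀ x : Box, x ≠ b → t x = t' x := fun x hx => if_neg hx
    have ht'le : ∀ x : Box, t' x ≤ n := by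
      intro x
      by_cases hx : x ∈ diagram q.part
      · exact (ht'std.mem x hx).2
      · rw [ht'std.zero_off x hx]; omega
    have hdiff : ∀ x : Box, x ∈ diagram lam.part → x ≠ b → x ∈ diagram q.part := by
      intro x hx hxb
      rw [hqdiag]
      exact ⟨hx, hxb⟩
    have hsub : ∀ x : Box, x ∈ diagram q.part → x ∈ diagram lam.part ∧ x ≠ b := by
      intro x hx
      rw [hqdiag] at hx
      exact ⟨hx.1, hx.2⟩
    have htle : ∀ x : Box, x ∈ diagram lam.part → t x ≤ n + 1 := by
      intro x _
      by_cases hxb : x = b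
      · rw [hxb, htb]
      · rw [htne x hxb]
        exact le_trans (ht'le x) (by omega)
    have hstd : IsStdTableau lam t := by
      refine ⟨?_, ?_, ?_, ?_, ?_, ?_⟩
      · intro x hx
        by_cases hxb : x = b
        · rw [hxb, htb]; omega
        · rw [htne x hxb]
          have := ht'std.mem x (hdiff x hx hxb)
          omega
      · intro x hx y hy heq
        by_cases hxb : x = b <;> by_cases hyb : y = b
        · rw [hxb, hyb]
        · rw [hxb, htb, htne y hyb] at heq
          have := ht'le y
          omega
        · rw [hyb, htb, htne x hxb] at heq
          have := ht'le x
          omega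
        · rw [htne x hxb, htne y hyb] at heq
          exact ht'std.injOn x (hdiff x hx hxb) y (hdiff y hy hyb) heq
      · intro k h1 h2
        by_cases hk : k = n + 1
        · exact ⟨b, hbmem, by rw [htb, hk]⟩
        · obtain ⟨x, hx, hxk⟩ := ht'std.surjOn k h1 (by omega)
          have hxb : x ≠ b := fun hcon => hbnotq (hcon ▸ hx)
          exact ⟨x, (hsub x hx).1, by rw [htne x hxb, hxk]⟩
      · intro r c m hx hy
        by_cases hxb : ((r, c, m) : Box) = b
        · exfalso
          rw [hbdef, box_eq_iff] at hxb
          obtain ⟨rfl, rfl, rfl⟩ := hxb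
          rw [mem_diagram_mk] at hy
          omega
        · by_cases hyb : ((r, c + 1, m) : Box) = b
          · rw [htne _ hxb, hyb, htb]
            have := ht'le ((r, c, m) : Box)
            omega
          · rw [htne _ hxb, htne _ hyb]
            exact ht'std.row_lt r c m (hdiff _ hx hxb) (hdiff _ hy hyb)
      · intro r c m hx hy
        by_cases hxb : ((r, c, m) : Box) = b
        · exfalso
          rw [hbdef, box_eq_iff] at hxb
          obtain ⟨rfl, rfl, rfl⟩ := hxb
          rw [mem_diagram_mk] at hy
          omega
        · by_cases hyb : ((r + 1, c, m) : Box) = b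
          · rw [htne _ hxb, hyb, htb]
            have := ht'le ((r, c, m) : Box)
            omega
          · rw [htne _ hxb, htne _ hyb]
            exact ht'std.col_lt r c m (hdiff _ hx hxb) (hdiff _ hy hyb)
      · intro x hx
        have hxb : x ≠ b := fun hcon => hx (hcon ▸ hbmem)
        rw [htne x hxb]
        exact ht'std.zero_off x (fun hcon => hx (hsub x hcon).1)
    refine ⟨t, hstd, ?_⟩
    intro x hx
    by_cases hxb : x = b
    · subst hxb
      have hSeq : {y ∈ diagram lam.part | t y ≤ t b} = diagram lam.part := by
        ext y
        exact ⟨fun hy => hy.1, fun hy => ⟨hy, by rw [htb]; exact htle y hy⟩⟩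
      constructor
      · rw [Set.eq_empty_iff_forall_notMem]
        rintro a ⟨haddable, hres, hgt⟩
        rw [hSeq] at haddable
        exact hAdd a haddable hres hgt
      · rw [Set.eq_empty_iff_forall_notMem]
        rintro a ⟨hremovable, _, hgt⟩
        rw [hSeq] at hremovable
        exact hRem a hremovable hgt
    · have hxq : x ∈ diagram q.part := hdiff x hx hxb
      have htx : t x = t' x := htne x hxb
      have hSeq : {y ∈ diagram lam.part | t y ≤ t x} = {y ∈ diagram q.part | t' y ≤ t' x} := by
        ext y
        constructor
        · rintro ⟨hy, hyle⟩
          by_cases hyb : y = b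
          · exfalso
            rw [hyb, htb, htx] at hyle
            have := ht'le x
            omega
          · exact ⟨hdiff y hy hyb, by rw [← htne y hyb, ← htx]; exact hyle⟩
        · rintro ⟨hy, hyle⟩
          obtain ⟨hy1, hy2⟩ := hsub y hy
          exact ⟨hy1, by rw [htne y hy2, htx]; exact hyle⟩
      obtain ⟨hA', hR'⟩ := ht'sets x hxq
      constructor
      · show ASet W κ lam t x = ∅
        rw [show ASet W κ lam t x = ASet W κ q t' x by unfold ASet; rw [hSeq]]
        exact hA'
      · show RSet W κ lam t x = ∅
        rw [show RSet W κ lam t x = RSet W κ q t' x by unfold RSet; rw [hSeq]]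
        exact hR'

end AuxLemmas
/-- under the FLOTW hypotheses, every multipartition with at most `h`
columns per component admits a standard tableau `t` with `𝒜_t(k) = ∅ = ℛ_t(k)` for all
`k`; in particular `deg t = 0`. -/
theorem flotw_degree_zero_tableau (ℓ n e h : ℕ) (hℓ : 1 ≤ ℓ) (hn : 1 ≤ n) (he : 2 ≤ e)
    (hh : 1 ≤ h) (W : Weighting ℓ)
    (hθ : ∀ m : ℤ, 1 ≤ m → m ≤ (ℓ : ℤ) → W.θ m = ((m : ℚ) - 1) / (ℓ : ℚ))
    (κ : ℤ → ZMod e)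
    (hκ : ∀ i : ZMod e,
      (∑ j ∈ Finset.range (h + 1),
        ((Finset.Icc (1 : ℤ) (ℓ : ℤ)).filter fun m => κ m = i + (j : ZMod e)).card) ≤ 1)
    (lam : Multipartition ℓ n)
    (hcols : ∀ m : ℤ, 1 ≤ m → m ≤ (ℓ : ℤ) → lam.part m 1 ≤ h) :
    ∃ t : Box → ℕ, IsStdTableau lam t ∧
      (∀ b ∈ diagram lam.part,
        ASet W κ lam t b = ∅ ∧ RSet W κ lam t b = ∅) ∧
      tabDeg W κ lam t = 0 := by
  obtain ⟨t, hstd, hsets⟩ := exists_flat_tableau hℓ hθ κ hκ he hh n lam hcols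
  refine ⟨t, hstd, hsets, ?_⟩
  have hzero : ∀ b ∈ diagram lam.part,
      (((ASet W κ lam t b).ncard : ℤ) - ((RSet W κ lam t b).ncard : ℤ)) = 0 := by
    intro b hb
    rw [(hsets b hb).1, (hsets b hb).2]
    simp
  unfold tabDeg
  exact finsum_mem_of_eqOn_zero hzero
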